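/- Let N ≥ 1. Equip B_sp × B_sp with the tensor-product type-B_N Kashiwara operators. Then every element u ⊗ v lies in the connected component of exactly one of the elements (+,…,+) ⊗ (+^k, −^{N−k}) with 0 ≤ k ≤ N, where (+^k, −^{N−k}) denotes the sign sequence whose first k entries are + and last N−k entries are −. Moreover, these elements are precisely the elements x ⊗ y with f̃_l(x ⊗ y) = 0 for all 1 ≤ l ≤ N. -/

import Mathlib

namespace CrystalPaper

/-- A sign sequence of length `N`: `true` codes `+`, `false` codes `−`. -/
abbrev Seq (N : ℕ) := Fin N → Bool

/-- The constant sequence `(+,…,+)`. -/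
def top (N : ℕ) : Seq N := fun _ => true

/-- The constant sequence `(−,…,−)`. -/
def bot (N : ℕ) : Seq N := fun _ => false

/-- The sequence `(+^k, −^{N−k})` (first `k` entries `+`, the rest `−`). -/
def lowSeq (N k : ℕ) : Seq N := fun i => decide ((i : ℕ) < k)

/-- The number of `−` entries of a sign sequence. -/
def minusCount (N : ℕ) (b : Seq N) : ℕ :=
  (Finset.univ.filter (fun i => b i = false)).card

/-- `B_sp^+`: sign sequences with an even number of `−` entries. -/
def BspPlus (N : ℕ) (b : Seq N) : Prop := Even (minusCount N b)

/-- `B_sp^−`: sign sequences with an odd number of `−` entries. -/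
def BspMinus (N : ℕ) (b : Seq N) : Prop := Odd (minusCount N b)

/-- The type-`B_N` Kashiwara raising operator `ẽ_l`, labels `1 ≤ l ≤ N`.
For `1 ≤ l ≤ N−1` it replaces `(b_l, b_{l+1}) = (+,−)` by `(−,+)`;
`ẽ_N` replaces `b_N = +` by `−`. -/
def eB (N l : ℕ) (b : Seq N) : Option (Seq N) :=
  if h : 1 ≤ l ∧ l + 1 ≤ N then
    let i : Fin N := ⟨l - 1, by omega⟩
    let j : Fin N := ⟨l, by omega⟩
    if b i = true ∧ b j = false then
      some (Function.update (Function.update b i false) j true)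
    else none
  else if h2 : l = N ∧ 1 ≤ N then
    let i : Fin N := ⟨N - 1, by omega⟩
    if b i = true then some (Function.update b i false) else none
  else none

/-- The type-`B_N` Kashiwara lowering operator `f̃_l`, labels `1 ≤ l ≤ N`.
For `1 ≤ l ≤ N−1` it replaces `(b_l, b_{l+1}) = (−,+)` by `(+,−)`;
`f̃_N` replaces `b_N = −` by `+`. -/
def fB (N l : ℕ) (b : Seq N) : Option (Seq N) :=
  if h : 1 ≤ l ∧ l + 1 ≤ N then
    let i : Fin N := ⟨l - 1, by omega⟩
    let j : Fin N := ⟨l, by omega⟩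
    if b i = false ∧ b j = true then
      some (Function.update (Function.update b i true) j false)
    else none
  else if h2 : l = N ∧ 1 ≤ N then
    let i : Fin N := ⟨N - 1, by omega⟩
    if b i = false then some (Function.update b i true) else none
  else none

/-- `n`-fold iteration of a partial operator. -/
def iterOp {σ : Type*} (f : σ → Option σ) : ℕ → σ → Option σ
  | 0, x => some x
  | n + 1, x => (f x).bind (iterOp f n)

/-- `max {n ≥ 0 : f^n x ≠ 0}`, as a supremum in `ℕ`.  Used for the string
lengths `ε_l(x) = max{n : ẽ_l^n x ≠ 0}` and `φ_l(x) = max{n : f̃_l^n x ≠ 0}`. -/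
noncomputable def opMax {σ : Type*} (f : σ → Option σ) (x : σ) : ℕ :=
  sSup {n | iterOp f n x ≠ none}

/-- The tensor-product raising operator `ẽ_l` on pairs (lowest-weight convention),
type `B_N`. -/
noncomputable def teB (N l : ℕ) (p : Seq N × Seq N) : Option (Seq N × Seq N) :=
  if opMax (eB N l) p.1 ≤ opMax (fB N l) p.2 then (eB N l p.2).map fun y => (p.1, y)
  else (eB N l p.1).map fun x => (x, p.2)

/-- The tensor-product lowering operator `f̃_l` on pairs (lowest-weight convention),
type `B_N`. -/
noncomputable def tfB (N l : ℕ) (p : Seq N × Seq N) : Option (Seq N × Seq N) :=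
  if opMax (eB N l) p.1 < opMax (fB N l) p.2 then (fB N l p.2).map fun y => (p.1, y)
  else (fB N l p.1).map fun x => (x, p.2)

/-- Connectedness in the tensor product of two type-`B_N` spin crystals. -/
def ConnB (N : ℕ) (p q : Seq N × Seq N) : Prop :=
  Relation.EqvGen (fun p q => ∃ l, 1 ≤ l ∧ l ≤ N ∧ (teB N l p = some q ∨ tfB N l p = some q)) p q

/-!
Let `height u v j` be the number of `−` among the first `j` letters of `v` minus the number
among the first `j` letters of `u`. An operator with label `l` changes the walk
`j ↦ height u v j` only at `j = l`, and the signature rule lets it act only when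
`(ε_l u, φ_l v) ≠ (1, 1)`, which is exactly when the walk has no strict peak at `l` (before and
after the move). Hence the maximal height is constant on components; on
`(+,…,+) ⊗ (+^k, −^{N−k})` it is `N − k`, which gives uniqueness. For existence, every `f̃_l`
moves a `−` to the right or deletes the last one, so applying `f̃`'s terminates, necessarily at an
element `x ⊗ y` killed by all `f̃_l`. Then `f̃_l x = 0` for all `l` forces `x = (+,…,+)`, so
`ε_l x = 0` for `l < N`, which forces `φ_l y = 0`: `y` contains no `−+`.
-/

open Finset in
lemma sup'_eq_sup'_erase_of_le {ι α : Type*} [SemilatticeSup α] [DecidableEq ι] {s : Finset ι}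
    (hs : s.Nonempty) (f : ι → α) {a b : ι} (hb : b ∈ s) (hba : b ≠ a)
    (hab : f a ≤ f b) :
    s.sup' hs f = (s.erase a).sup' ⟨b, mem_erase.mpr ⟨hba, hb⟩⟩ f := by
  refine le_antisymm (sup'_le _ _ fun i hi => ?_) (sup'_mono f (erase_subset a s) _)
  obtain rfl | hia := eq_or_ne i a
  · exact hab.trans (le_sup' f (mem_erase.mpr ⟨hba, hb⟩))
  · exact le_sup' f (mem_erase.mpr ⟨hia, hi⟩)

section PartialOperator

variable {σ : Type*} (f : σ → Option σ)

lemma opMax_eq_zero {x : σ} (hx : f x = none) : opMax f x = 0 := by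
  have : {n | iterOp f n x ≠ none} = {0} := by
    ext (_ | _) <;> simp [iterOp, hx]
  rw [opMax, this, csSup_singleton]

lemma opMax_eq_one {x y : σ} (hxy : f x = some y) (hy : f y = none) : opMax f x = 1 := by
  have : {n | iterOp f n x ≠ none} = {0, 1} := by
    ext (_ | _ | _) <;> simp [iterOp, hxy, hy]
  rw [opMax, this, csSup_pair]
  rfl

lemma opMax_eq_ite (hf : ∀ x y, f x = some y → f y = none) (x : σ) :
    opMax f x = if f x = none then 0 else 1 := by
  split_ifs with hx
  · exact opMax_eq_zero f hx
  · obtain ⟨y, hy⟩ := Option.ne_none_iff_exists'.mp hx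
    exact opMax_eq_one f hy (hf x y hy)

end PartialOperator

section SingleFactor

variable {N l : ℕ}

lemma eB_of_lt (hl : 1 ≤ l) (hlN : l < N) (b : Seq N) :
    eB N l b = if b ⟨l - 1, by omega⟩ = true ∧ b ⟨l, hlN⟩ = false
      then some (b ∘ Equiv.swap ⟨l - 1, by omega⟩ ⟨l, hlN⟩) else none := by
  rw [eB, dif_pos ⟨hl, hlN⟩]
  dsimp only
  split_ifs with h
  · congr 1
    funext k
    simp only [Function.update_apply, Function.comp_apply, Equiv.swap_apply_def]
    split_ifs <;> simp_all
  · rfl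

lemma fB_of_lt (hl : 1 ≤ l) (hlN : l < N) (b : Seq N) :
    fB N l b = if b ⟨l - 1, by omega⟩ = false ∧ b ⟨l, hlN⟩ = true
      then some (b ∘ Equiv.swap ⟨l - 1, by omega⟩ ⟨l, hlN⟩) else none := by
  rw [fB, dif_pos ⟨hl, hlN⟩]
  dsimp only
  split_ifs with h
  · congr 1
    funext k
    simp only [Function.update_apply, Function.comp_apply, Equiv.swap_apply_def]
    split_ifs <;> simp_all
  · rfl

lemma eB_last (hN : 1 ≤ N) (b : Seq N) :
    eB N N b = if b ⟨N - 1, by omega⟩ = true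
      then some (Function.update b ⟨N - 1, by omega⟩ false) else none := by
  rw [eB, dif_neg (by omega), dif_pos ⟨rfl, hN⟩]

lemma fB_last (hN : 1 ≤ N) (b : Seq N) :
    fB N N b = if b ⟨N - 1, by omega⟩ = false
      then some (Function.update b ⟨N - 1, by omega⟩ true) else none := by
  rw [fB, dif_neg (by omega), dif_pos ⟨rfl, hN⟩]

lemma eB_eq_none_or_fB_eq_none (hl : 1 ≤ l) (hlN : l ≤ N) (b : Seq N) :
    eB N l b = none ∨ fB N l b = none := by
  rcases hlN.lt_or_eq with hlN | rfl
  · rw [eB_of_lt hl hlN, fB_of_lt hl hlN]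
    by_cases h : b ⟨l - 1, by omega⟩ <;> simp [h]
  · rw [eB_last hl, fB_last hl]
    by_cases h : b ⟨l - 1, by omega⟩ <;> simp [h]

lemma eB_eq_none_of_eq_some (hl : 1 ≤ l) (hlN : l ≤ N) {b b' : Seq N}
    (h : eB N l b = some b') : eB N l b' = none := by
  rcases hlN.lt_or_eq with hlN | rfl
  · rw [eB_of_lt hl hlN] at h ⊢
    split_ifs at h with hb
    cases h
    simp [Equiv.swap_apply_left, hb.2]
  · rw [eB_last hl] at h ⊢
    split_ifs at h
    cases h
    simp

lemma fB_eq_none_of_eq_some (hl : 1 ≤ l) (hlN : l ≤ N) {b b' : Seq N}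
    (h : fB N l b = some b') : fB N l b' = none := by
  rcases hlN.lt_or_eq with hlN | rfl
  · rw [fB_of_lt hl hlN] at h ⊢
    split_ifs at h with hb
    cases h
    simp [Equiv.swap_apply_left, hb.2]
  · rw [fB_last hl] at h ⊢
    split_ifs at h
    cases h
    simp

lemma opMax_eB (hl : 1 ≤ l) (hlN : l ≤ N) (b : Seq N) :
    opMax (eB N l) b = if eB N l b = none then 0 else 1 :=
  opMax_eq_ite _ (fun _ _ => eB_eq_none_of_eq_some hl hlN) b

lemma opMax_fB (hl : 1 ≤ l) (hlN : l ≤ N) (b : Seq N) :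
    opMax (fB N l) b = if fB N l b = none then 0 else 1 :=
  opMax_eq_ite _ (fun _ _ => fB_eq_none_of_eq_some hl hlN) b

end SingleFactor

section TensorProduct

variable {N l : ℕ}

lemma opMax_eB_lt_opMax_fB_iff (hl : 1 ≤ l) (hlN : l ≤ N) (x y : Seq N) :
    opMax (eB N l) x < opMax (fB N l) y ↔ eB N l x = none ∧ fB N l y ≠ none := by
  rw [opMax_eB hl hlN, opMax_fB hl hlN]
  split_ifs <;> simp_all

lemma opMax_eB_le_opMax_fB_iff (hl : 1 ≤ l) (hlN : l ≤ N) (x y : Seq N) :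
    opMax (eB N l) x ≤ opMax (fB N l) y ↔ eB N l x = none ∨ fB N l y ≠ none := by
  rw [opMax_eB hl hlN, opMax_fB hl hlN]
  split_ifs <;> simp_all

lemma tfB_eq_none_iff (hl : 1 ≤ l) (hlN : l ≤ N) (x y : Seq N) :
    tfB N l (x, y) = none ↔ fB N l x = none ∧ (eB N l x ≠ none ∨ fB N l y = none) := by
  simp only [tfB, opMax_eB_lt_opMax_fB_iff hl hlN]
  split_ifs with h
  · simp [h]
  · simp only [Option.map_eq_none_iff, iff_self_and]
    tauto

lemma tfB_eq_some {p q : Seq N × Seq N} (h : tfB N l p = some q) :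
    (fB N l p.1 = some q.1 ∧ q.2 = p.2) ∨ (q.1 = p.1 ∧ fB N l p.2 = some q.2) := by
  rw [tfB] at h
  split_ifs at h <;> obtain ⟨b, hb, rfl⟩ := Option.map_eq_some_iff.mp h <;> simp [hb]

lemma teB_eq_some {p q : Seq N × Seq N} (h : teB N l p = some q) :
    (eB N l p.1 = some q.1 ∧ q.2 = p.2) ∨ (q.1 = p.1 ∧ eB N l p.2 = some q.2) := by
  rw [teB] at h
  split_ifs at h <;> obtain ⟨b, hb, rfl⟩ := Option.map_eq_some_iff.mp h <;> simp [hb]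

/-- `min (ε_l x) (φ_l y) = 0`. -/
def Unpaired (N l : ℕ) (p : Seq N × Seq N) : Prop :=
  eB N l p.1 = none ∨ fB N l p.2 = none

lemma unpaired_of_tfB_eq_some (hl : 1 ≤ l) (hlN : l ≤ N) {p q : Seq N × Seq N}
    (h : tfB N l p = some q) : Unpaired N l p ∧ Unpaired N l q := by
  obtain ⟨x, y⟩ := p
  rw [tfB] at h
  split_ifs at h with hxy
  · rw [opMax_eB_lt_opMax_fB_iff hl hlN] at hxy
    obtain ⟨y', -, rfl⟩ := Option.map_eq_some_iff.mp h
    exact ⟨.inl hxy.1, .inl hxy.1⟩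
  · obtain ⟨x', hx', rfl⟩ := Option.map_eq_some_iff.mp h
    have hx : eB N l x = none :=
      (eB_eq_none_or_fB_eq_none hl hlN x).resolve_right (by simp [hx'])
    have hy : fB N l y = none := by
      simpa [opMax_eB_lt_opMax_fB_iff hl hlN, hx] using hxy
    exact ⟨.inl hx, .inr hy⟩

lemma unpaired_of_teB_eq_some (hl : 1 ≤ l) (hlN : l ≤ N) {p q : Seq N × Seq N}
    (h : teB N l p = some q) : Unpaired N l p ∧ Unpaired N l q := by
  obtain ⟨x, y⟩ := p
  rw [teB] at h
  split_ifs at h with hxy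
  · obtain ⟨y', hy', rfl⟩ := Option.map_eq_some_iff.mp h
    have hy : fB N l y = none :=
      (eB_eq_none_or_fB_eq_none hl hlN y).resolve_left (by simp [hy'])
    have hx : eB N l x = none := by
      simpa [opMax_eB_le_opMax_fB_iff hl hlN, hy] using hxy
    exact ⟨.inl hx, .inl hx⟩
  · rw [opMax_eB_le_opMax_fB_iff hl hlN, not_or, not_not] at hxy
    obtain ⟨x', -, rfl⟩ := Option.map_eq_some_iff.mp h
    exact ⟨.inr hxy.2, .inr hxy.2⟩

end TensorProduct

section LowestWeight

open Finset

variable {N : ℕ}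

lemma eq_lowSeq_of_antitone {b : Seq N} (hb : Antitone b) :
    b = lowSeq N #{i | b i = true} := by
  funext i
  rw [lowSeq, Bool.eq_iff_iff, decide_eq_true_iff]
  constructor
  · intro hi
    have hsub : Iic i ⊆ ({j | b j = true} : Finset (Fin N)) := fun j hj => by
      simpa [hi, Bool.le_iff_imp] using hb (mem_Iic.mp hj)
    simpa [Fin.card_Iic] using card_le_card hsub
  · intro hi
    by_contra hbi
    have hsub : ({j | b j = true} : Finset (Fin N)) ⊆ Iio i := fun j hj => by
      simp only [mem_filter, mem_univ, true_and] at hj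
      simp only [mem_Iio]
      by_contra hij
      simpa [hj, hbi, Bool.le_iff_imp] using hb (not_lt.mp hij)
    have := (card_le_card hsub).trans_eq (Fin.card_Iio i)
    omega

lemma exists_lowSeq_iff (b : Seq N) :
    (∃ k ≤ N, b = lowSeq N k) ↔ ∀ l, 1 ≤ l → l < N → fB N l b = none := by
  constructor
  · rintro ⟨k, -, rfl⟩ l hl hlN
    rw [fB_of_lt hl hlN, if_neg]
    simp only [lowSeq, decide_eq_false_iff_not, decide_eq_true_eq, not_and, not_lt]
    omega
  · intro h
    obtain _ | n := N
    · exact ⟨0, le_rfl, funext fun i => i.elim0⟩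
    refine ⟨_, card_finset_fin_le _, eq_lowSeq_of_antitone (Fin.antitone_iff_succ_le.mpr ?_)⟩
    intro i
    have := h (i + 1) (by omega) (by omega)
    simp only [fB_of_lt (by omega : 1 ≤ i.val + 1) (by omega : i.val + 1 < n + 1),
      ite_eq_right_iff, reduceCtorEq, imp_false, not_and] at this
    rw [Bool.le_iff_imp]
    intro hs
    change b ⟨i, by omega⟩ = true
    by_contra hc
    exact this (by simpa using hc) hs

lemma eq_top_iff_forall_fB_eq_none (b : Seq N) :
    b = top N ↔ ∀ l, 1 ≤ l → l ≤ N → fB N l b = none := by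
  constructor
  · rintro rfl l hl hlN
    rcases hlN.lt_or_eq with hlN | rfl
    · simp [fB_of_lt hl hlN, top]
    · simp [fB_last hl, top]
  · intro h
    obtain ⟨k, -, rfl⟩ := (exists_lowSeq_iff b).mpr fun l hl hlN => h l hl hlN.le
    funext i
    have hN : 1 ≤ N := Nat.one_le_of_lt i.isLt
    have hlast := h N hN le_rfl
    simp only [fB_last hN, lowSeq, ite_eq_right_iff, reduceCtorEq, imp_false,
      decide_eq_false_iff_not, not_not] at hlast
    simp only [lowSeq, top, decide_eq_true_eq]
    omega

lemma forall_tfB_eq_none_iff (x y : Seq N) :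
    (∀ l, 1 ≤ l → l ≤ N → tfB N l (x, y) = none) ↔
      x = top N ∧ ∃ k ≤ N, y = lowSeq N k := by
  rw [exists_lowSeq_iff, eq_top_iff_forall_fB_eq_none]
  constructor
  · intro h
    have hx l (hl : 1 ≤ l) (hlN : l ≤ N) := ((tfB_eq_none_iff hl hlN x y).mp (h l hl hlN)).1
    refine ⟨hx, fun l hl hlN => ?_⟩
    obtain rfl := (eq_top_iff_forall_fB_eq_none x).mpr hx
    have := ((tfB_eq_none_iff hl hlN.le _ y).mp (h l hl hlN.le)).2
    simpa [eB_of_lt hl hlN, top] using this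
  · rintro ⟨hx, hy⟩ l hl hlN
    refine (tfB_eq_none_iff hl hlN x y).mpr ⟨hx l hl hlN, ?_⟩
    rcases hlN.lt_or_eq with hlN | rfl
    · exact .inr (hy l hl hlN)
    · obtain rfl := (eq_top_iff_forall_fB_eq_none x).mpr hx
      exact .inl (by simp [eB_last hl, top])

end LowestWeight

section PrefixCount

open Finset

variable {N l : ℕ}

def prefixMinusCount (b : Seq N) (j : ℕ) : ℕ := #{i : Fin N | (i : ℕ) < j ∧ b i = false}

lemma prefixMinusCount_comp_swap (b : Seq N) {a c : Fin N} {j : ℕ}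
    (h : (a : ℕ) < j ↔ (c : ℕ) < j) :
    prefixMinusCount (b ∘ Equiv.swap a c) j = prefixMinusCount b j := by
  refine card_equiv (Equiv.swap a c) fun i => ?_
  have hi : ((Equiv.swap a c i : Fin N) : ℕ) < j ↔ (i : ℕ) < j := by
    rw [Equiv.swap_apply_def]
    split_ifs with h1 h2 <;> subst_vars <;> tauto
  simp [hi]

lemma prefixMinusCount_update (b : Seq N) {i : Fin N} {j : ℕ} (hj : j ≤ i) (t : Bool) :
    prefixMinusCount (Function.update b i t) j = prefixMinusCount b j := by
  refine congrArg card (filter_congr fun k _ => and_congr_right fun hk => ?_)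
  rw [Function.update_of_ne (by rintro rfl; omega)]

lemma prefixMinusCount_lt {b b' : Seq N} {j : ℕ}
    (hle : ∀ i : Fin N, (i : ℕ) < j → b i ≤ b' i)
    {i₀ : Fin N} (hi₀ : (i₀ : ℕ) < j) (hb : b i₀ = false) (hb' : b' i₀ = true) :
    prefixMinusCount b' j < prefixMinusCount b j := by
  refine card_lt_card ((ssubset_iff_of_subset fun i hi => ?_).mpr ⟨i₀, ?_, ?_⟩)
  · simp only [mem_filter, mem_univ, true_and] at hi ⊢
    exact ⟨hi.1, by simpa [hi.2, Bool.le_iff_imp] using hle i hi.1⟩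
  · simp [hi₀, hb]
  · simp [hb']

lemma prefixMinusCount_mono (b : Seq N) : Monotone (prefixMinusCount b) :=
  fun _ _ hjj' => card_le_card fun _ hi => by
    simp only [mem_filter] at hi ⊢
    exact ⟨hi.1, hi.2.1.trans_le hjj', hi.2.2⟩

lemma prefixMinusCount_succ (b : Seq N) (i : Fin N) :
    prefixMinusCount b (i + 1) = prefixMinusCount b i + if b i = false then 1 else 0 := by
  rw [prefixMinusCount, prefixMinusCount]
  split_ifs with hb
  · rw [← card_insert_of_notMem (a := i) (by simp)]
    congr 1
    ext k
    simp only [mem_insert, mem_filter, mem_univ, true_and]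
    constructor
    · rintro ⟨hk, hbk⟩
      rcases Nat.lt_succ_iff_lt_or_eq.mp hk with hk | hk
      · exact .inr ⟨hk, hbk⟩
      · exact .inl (Fin.ext hk)
    · rintro (rfl | ⟨hk, hbk⟩)
      · exact ⟨Nat.lt_succ_self _, hb⟩
      · exact ⟨by omega, hbk⟩
  · refine congrArg card (filter_congr fun k _ => and_congr_left fun hbk => ?_)
    have : k ≠ i := by rintro rfl; exact hb hbk
    have := Fin.val_ne_of_ne this
    omega

lemma prefixMinusCount_top (j : ℕ) : prefixMinusCount (top N) j = 0 := by
  simp [prefixMinusCount, top]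

lemma prefixMinusCount_lowSeq (k : ℕ) : prefixMinusCount (lowSeq N k) N = N - k := by
  have h := card_filter_add_card_filter_not (s := univ) (p := fun i : Fin N => (i : ℕ) < k)
  simp only [Fin.card_filter_val_lt, card_univ, Fintype.card_fin, not_lt] at h
  simp only [prefixMinusCount, lowSeq, Fin.is_lt, decide_eq_false_iff_not, not_lt, true_and]
  omega

lemma prefixMinusCount_eq_of_step (hl : 1 ≤ l) (hlN : l ≤ N) {b b' : Seq N}
    (h : eB N l b = some b' ∨ fB N l b = some b') {j : ℕ} (hj : j ≤ N) (hjl : j ≠ l) :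
    prefixMinusCount b' j = prefixMinusCount b j := by
  rcases hlN.lt_or_eq with hlN | rfl
  · obtain rfl : b' = b ∘ Equiv.swap ⟨l - 1, by omega⟩ ⟨l, hlN⟩ := by
      rcases h with h | h <;> [rw [eB_of_lt hl hlN] at h; rw [fB_of_lt hl hlN] at h] <;>
        split_ifs at h <;> exact (Option.some_injective _ h).symm
    exact prefixMinusCount_comp_swap b (by simp only; omega)
  · obtain ⟨t, rfl⟩ : ∃ t, b' = Function.update b ⟨l - 1, by omega⟩ t := by
      rcases h with h | h <;> [rw [eB_last hl] at h; rw [fB_last hl] at h] <;>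
        split_ifs at h <;> exact ⟨_, (Option.some_injective _ h).symm⟩
    exact prefixMinusCount_update b (by simp only; omega) t

lemma prefixMinusCount_lt_of_fB (hl : 1 ≤ l) (hlN : l ≤ N) {b b' : Seq N}
    (h : fB N l b = some b') : prefixMinusCount b' l < prefixMinusCount b l := by
  rcases hlN.lt_or_eq with hlN | rfl
  · rw [fB_of_lt hl hlN] at h
    split_ifs at h with hb
    cases h
    refine prefixMinusCount_lt (fun i hi => ?_) (by simp only; omega) hb.1 (by simp [hb.2])
    by_cases hi' : i = ⟨l - 1, by omega⟩
    · simp [hi', hb.2]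
    · rw [Function.comp_apply, Equiv.swap_apply_of_ne_of_ne hi' (by simp [Fin.ext_iff]; omega)]
  · rw [fB_last hl] at h
    split_ifs at h with hb
    cases h
    refine prefixMinusCount_lt (fun i _ => ?_) (by simp only; omega) hb (by simp)
    rw [Function.update_apply]
    split_ifs <;> simp

lemma prefixMinusCount_le_of_fB (hl : 1 ≤ l) (hlN : l ≤ N) {b b' : Seq N}
    (h : fB N l b = some b') {j : ℕ} (hj : j ≤ N) :
    prefixMinusCount b' j ≤ prefixMinusCount b j := by
  obtain rfl | hjl := eq_or_ne j l
  · exact (prefixMinusCount_lt_of_fB hl hlN h).le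
  · exact (prefixMinusCount_eq_of_step hl hlN (.inr h) hj hjl).le

end PrefixCount

section Height

open Finset

variable {N l : ℕ}

def height (u v : Seq N) (j : ℕ) : ℤ := prefixMinusCount v j - prefixMinusCount u j

def peakHeight (p : Seq N × Seq N) : ℤ :=
  (range (N + 1)).sup' (nonempty_range_iff.mpr N.succ_ne_zero) (height p.1 p.2)

lemma exists_height_ge_of_unpaired (hl : 1 ≤ l) (hlN : l ≤ N) {p : Seq N × Seq N}
    (h : Unpaired N l p) :
    ∃ j ∈ range (N + 1), j ≠ l ∧ height p.1 p.2 l ≤ height p.1 p.2 j := by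
  obtain ⟨u, v⟩ := p
  have hu₀ := prefixMinusCount_succ u ⟨l - 1, by omega⟩
  have hv₀ := prefixMinusCount_succ v ⟨l - 1, by omega⟩
  simp only [Nat.sub_add_cancel hl] at hu₀ hv₀
  rcases hlN.lt_or_eq with hlN | rfl
  · have hu₁ := prefixMinusCount_succ u ⟨l, hlN⟩
    have hv₁ := prefixMinusCount_succ v ⟨l, hlN⟩
    simp only [Unpaired, eB_of_lt hl hlN, fB_of_lt hl hlN] at h
    by_cases hp : v ⟨l - 1, by omega⟩ = false ∧ u ⟨l - 1, by omega⟩ = true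
    · exact ⟨l + 1, mem_range.mpr (by omega), by omega, by grind [height]⟩
    · exact ⟨l - 1, mem_range.mpr (by omega), by omega, by grind [height]⟩
  · simp only [Unpaired, eB_last hl, fB_last hl] at h
    exact ⟨l - 1, mem_range.mpr (by omega), by omega, by grind [height]⟩

lemma peakHeight_eq_of_unpaired (hl : 1 ≤ l) (hlN : l ≤ N) {p q : Seq N × Seq N}
    (hp : Unpaired N l p) (hq : Unpaired N l q)
    (hpq : ∀ j ≤ N, j ≠ l → height q.1 q.2 j = height p.1 p.2 j) :
    peakHeight p = peakHeight q := by
  obtain ⟨j₁, hj₁, hj₁l, hp⟩ := exists_height_ge_of_unpaired hl hlN hp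
  obtain ⟨j₂, hj₂, hj₂l, hq⟩ := exists_height_ge_of_unpaired hl hlN hq
  rw [peakHeight, peakHeight, sup'_eq_sup'_erase_of_le _ _ hj₁ hj₁l hp,
    sup'_eq_sup'_erase_of_le _ _ hj₂ hj₂l hq]
  refine sup'_congr _ rfl fun j hj => (hpq j ?_ (ne_of_mem_erase hj)).symm
  have := mem_range.mp (mem_of_mem_erase hj)
  omega

lemma peakHeight_eq_of_step (hl : 1 ≤ l) (hlN : l ≤ N) {p q : Seq N × Seq N}
    (h : teB N l p = some q ∨ tfB N l p = some q) : peakHeight p = peakHeight q := by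
  obtain ⟨hp, hq⟩ := h.elim (unpaired_of_teB_eq_some hl hlN) (unpaired_of_tfB_eq_some hl hlN)
  have hmove : ((eB N l p.1 = some q.1 ∨ fB N l p.1 = some q.1) ∧ q.2 = p.2) ∨
      (q.1 = p.1 ∧ (eB N l p.2 = some q.2 ∨ fB N l p.2 = some q.2)) := by
    rcases h with h | h
    · exact (teB_eq_some h).imp (And.imp_left .inl) (And.imp_right .inl)
    · exact (tfB_eq_some h).imp (And.imp_left .inr) (And.imp_right .inr)
  refine peakHeight_eq_of_unpaired hl hlN hp hq fun j hj hjl => ?_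
  rcases hmove with ⟨h₁, h₂⟩ | ⟨h₁, h₂⟩
  · rw [height, height, h₂, prefixMinusCount_eq_of_step hl hlN h₁ hj hjl]
  · rw [height, height, h₁, prefixMinusCount_eq_of_step hl hlN h₂ hj hjl]

lemma peakHeight_eq_of_connB {p q : Seq N × Seq N} (h : ConnB N p q) :
    peakHeight p = peakHeight q := by
  induction h with
  | rel _ _ h =>
    obtain ⟨l, hl, hlN, h⟩ := h
    exact peakHeight_eq_of_step hl hlN h
  | refl => rfl
  | symm _ _ _ ih => exact ih.symm
  | trans _ _ _ _ _ ih₁ ih₂ => exact ih₁.trans ih₂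

lemma peakHeight_top_lowSeq {k : ℕ} (hk : k ≤ N) :
    peakHeight (top N, lowSeq N k) = N - k := by
  have hheight j : height (top N) (lowSeq N k) j = prefixMinusCount (lowSeq N k) j := by
    simp [height, prefixMinusCount_top]
  have hN : height (top N) (lowSeq N k) N = N - k := by
    rw [hheight, prefixMinusCount_lowSeq]
    omega
  refine le_antisymm (sup'_le _ _ fun j hj => ?_) (hN ▸ le_sup' _ (self_mem_range_succ N))
  rw [← hN, hheight, hheight]
  exact_mod_cast prefixMinusCount_mono _ (Nat.lt_succ_iff.mp (mem_range.mp hj))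

end Height

section Existence

open Finset

variable {N l : ℕ}

def prefixMinusTotal (p : Seq N × Seq N) : ℕ :=
  ∑ j ∈ range (N + 1), (prefixMinusCount p.1 j + prefixMinusCount p.2 j)

lemma prefixMinusTotal_lt_of_tfB (hl : 1 ≤ l) (hlN : l ≤ N) {p q : Seq N × Seq N}
    (h : tfB N l p = some q) : prefixMinusTotal q < prefixMinusTotal p := by
  have hlmem : l ∈ range (N + 1) := mem_range.mpr (by omega)
  have hjN {j} (hj : j ∈ range (N + 1)) : j ≤ N := Nat.lt_succ_iff.mp (mem_range.mp hj)
  rcases tfB_eq_some h with ⟨h₁, h₂⟩ | ⟨h₁, h₂⟩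
  · refine sum_lt_sum (fun j hj => ?_) ⟨l, hlmem, ?_⟩ <;> rw [h₂]
    · exact Nat.add_le_add_right (prefixMinusCount_le_of_fB hl hlN h₁ (hjN hj)) _
    · exact Nat.add_lt_add_right (prefixMinusCount_lt_of_fB hl hlN h₁) _
  · refine sum_lt_sum (fun j hj => ?_) ⟨l, hlmem, ?_⟩ <;> rw [h₁]
    · exact Nat.add_le_add_left (prefixMinusCount_le_of_fB hl hlN h₂ (hjN hj)) _
    · exact Nat.add_lt_add_left (prefixMinusCount_lt_of_fB hl hlN h₂) _

lemma exists_connB_top_lowSeq (p : Seq N × Seq N) :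
    ∃ k ≤ N, ConnB N p (top N, lowSeq N k) := by
  by_cases hlow : ∀ l, 1 ≤ l → l ≤ N → tfB N l p = none
  · obtain ⟨hx, k, hk, hy⟩ := (forall_tfB_eq_none_iff p.1 p.2).mp hlow
    exact ⟨k, hk, hx ▸ hy ▸ .refl _⟩
  · push Not at hlow
    obtain ⟨l, hl, hlN, hq⟩ := hlow
    obtain ⟨q, hq⟩ := Option.ne_none_iff_exists'.mp hq
    obtain ⟨k, hk, hqk⟩ := exists_connB_top_lowSeq q
    exact ⟨k, hk, .trans _ _ _ (.rel _ _ ⟨l, hl, hlN, .inr hq⟩) hqk⟩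
termination_by prefixMinusTotal p
decreasing_by exact prefixMinusTotal_lt_of_tfB hl hlN hq

end Existence

theorem Bsp_tensor_Bsp_decomposition_B_general (N : ℕ) :
    (∀ u v : Seq N,
      ∃! k, k ≤ N ∧ ConnB N (u, v) (top N, lowSeq N k)) ∧
    (∀ x y : Seq N,
      ((∀ l, 1 ≤ l → l ≤ N → tfB N l (x, y) = none) ↔
        (x = top N ∧ ∃ k, k ≤ N ∧ y = lowSeq N k))) := by
  refine ⟨fun u v => ?_, forall_tfB_eq_none_iff⟩
  obtain ⟨k, hk, hconn⟩ := exists_connB_top_lowSeq (u, v)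
  refine ⟨k, ⟨hk, hconn⟩, fun k' ⟨hk', hconn'⟩ => ?_⟩
  have h := (peakHeight_eq_of_connB hconn).symm.trans (peakHeight_eq_of_connB hconn')
  rw [peakHeight_top_lowSeq hk, peakHeight_top_lowSeq hk'] at h
  omega

/-- Decomposition of `B_sp ⊗ B_sp` (type `B_N`, `N ≥ 1`): every
element lies in the connected component of exactly one of the elements
`(+,…,+) ⊗ (+^k, −^{N−k})` with `0 ≤ k ≤ N`, and these elements are precisely the
elements killed by all tensor-product operators `f̃_l`, `1 ≤ l ≤ N`. -/
theorem Bsp_tensor_Bsp_decomposition_B (N : ℕ) (hN : 1 ≤ N) :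
    (∀ u v : Seq N,
      ∃! k, k ≤ N ∧ ConnB N (u, v) (top N, lowSeq N k)) ∧
    (∀ x y : Seq N,
      ((∀ l, 1 ≤ l → l ≤ N → tfB N l (x, y) = none) ↔
        (x = top N ∧ ∃ k, k ≤ N ∧ y = lowSeq N k))) :=
  Bsp_tensor_Bsp_decomposition_B_general N

end CrystalPaper
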